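/- If η₁, ..., η_n are i.i.d. real random variables with mean zero, |η_i| ≤ c almost surely for each i, and Var(η₁) = σ², then for any positive numbers z and d satisfying c z ≤ d and n z σ² ≤ d², one has P(|Σ_{i=1}^n η_i| ≥ 3d) ≤ 2 e^{−z}. (Lemma 3.1, exponential inequality of Lo & Singh) -/

import Mathlib

/-!
Chernoff's bound with the parameter `t = z / d`. Since `|t η_i| ≤ c z / d ≤ 1`, the inequality
`exp x ≤ 1 + x + 3 x² / 4` for `|x| ≤ 1` bounds each moment generating function by
`exp (3 t² σ² / 4)`, so by independence that of the sum is at most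
`exp (3 n t² σ² / 4) ≤ exp (3 z / 4)`, using `n z σ² ≤ d²`. Each tail `P(± ∑ η_i ≥ 3 d)` is then
at most `exp (-3 z + 3 z / 4) ≤ exp (-z)`.
-/

open MeasureTheory ProbabilityTheory Real

lemma Real.exp_le_one_add_add_mul_sq {x : ℝ} (hx : |x| ≤ 1) :
    exp x ≤ 1 + x + 3 / 4 * x ^ 2 := by
  have h := Real.exp_bound hx (n := 2) (by norm_num)
  simp only [Finset.sum_range_succ, Finset.sum_range_zero, sq_abs] at h
  norm_num at h
  linarith [(abs_sub_le_iff.1 h).1]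

namespace ProbabilityTheory

variable {Ω : Type*} [MeasurableSpace Ω] {μ : Measure Ω} {X : Ω → ℝ} {c t : ℝ}

lemma mgf_le_one_add_mul_variance [IsProbabilityMeasure μ] (hX : AEMeasurable X μ)
    (hmean : μ[X] = 0) (hb : ∀ᵐ ω ∂μ, |X ω| ≤ c) (htc : |t| * c ≤ 1) :
    mgf X μ t ≤ 1 + 3 / 4 * t ^ 2 * variance X μ := by
  have hX2 : Integrable (fun ω => X ω ^ 2) μ :=
    (memLp_of_bounded (hb.mono fun ω h => abs_le.1 h) hX.aestronglyMeasurable 2).integrable_sq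
  have hX1 : Integrable X μ :=
    (memLp_of_bounded (hb.mono fun ω h => abs_le.1 h) hX.aestronglyMeasurable 1).integrable le_rfl
  have hpoint : ∀ᵐ ω ∂μ, exp (t * X ω) ≤ 1 + t * X ω + 3 / 4 * t ^ 2 * X ω ^ 2 := by
    filter_upwards [hb] with ω hω
    have hx : |t * X ω| ≤ 1 := by
      rw [abs_mul]
      exact (mul_le_mul_of_nonneg_left hω (abs_nonneg t)).trans htc
    linarith [exp_le_one_add_add_mul_sq hx]
  have hint : Integrable (fun ω => exp (t * X ω)) μ :=
    integrable_exp_mul_of_mem_Icc hX (hb.mono fun ω h => abs_le.1 h)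
  have hlin : Integrable (fun ω => 1 + t * X ω) μ := (integrable_const 1).add (hX1.const_mul t)
  have hquad : Integrable (fun ω => 3 / 4 * t ^ 2 * X ω ^ 2) μ := hX2.const_mul _
  calc mgf X μ t ≤ ∫ ω, (1 + t * X ω + 3 / 4 * t ^ 2 * X ω ^ 2) ∂μ :=
        integral_mono_ae hint (hlin.add hquad) hpoint
    _ = 1 + 3 / 4 * t ^ 2 * variance X μ := by
        rw [integral_add hlin hquad, integral_add (integrable_const 1) (hX1.const_mul t),
          integral_const_mul, integral_const_mul, hmean, variance_of_integral_eq_zero hX hmean]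
        simp

lemma mgf_le_exp_mul_variance [IsProbabilityMeasure μ] (hX : AEMeasurable X μ)
    (hmean : μ[X] = 0) (hb : ∀ᵐ ω ∂μ, |X ω| ≤ c) (htc : |t| * c ≤ 1) :
    mgf X μ t ≤ exp (3 / 4 * t ^ 2 * variance X μ) :=
  (mgf_le_one_add_mul_variance hX hmean hb htc).trans <| by
    linarith [add_one_le_exp (3 / 4 * t ^ 2 * variance X μ)]

lemma iIndepFun.mgf_sum_le_exp_mul_variance {ι : Type*} {X : ι → Ω → ℝ} {j : ι}
    (h_indep : iIndepFun X μ) (h_meas : ∀ i, Measurable (X i))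
    (hident : ∀ i, IdentDistrib (X i) (X j) μ μ) (hmean : μ[X j] = 0)
    (hb : ∀ᵐ ω ∂μ, |X j ω| ≤ c) (htc : |t| * c ≤ 1) (s : Finset ι) :
    mgf (∑ i ∈ s, X i) μ t ≤ exp (s.card * (3 / 4 * t ^ 2 * variance (X j) μ)) := by
  have := h_indep.isProbabilityMeasure
  rw [h_indep.mgf_sum h_meas, exp_nat_mul, ← Finset.prod_const]
  refine Finset.prod_le_prod (fun i _ => mgf_nonneg) fun i _ => ?_
  rw [mgf_congr_of_identDistrib (X i) (X j) (hident i)]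
  exact mgf_le_exp_mul_variance (h_meas j).aemeasurable hmean hb htc

lemma measureReal_abs_ge_le_exp_mul_mgf_add [IsFiniteMeasure μ] (ε : ℝ) (ht : 0 ≤ t)
    (h_int : Integrable (fun ω => exp (t * X ω)) μ)
    (h_int' : Integrable (fun ω => exp (-t * X ω)) μ) :
    μ.real {ω | ε ≤ |X ω|} ≤ exp (-t * ε) * (mgf X μ t + mgf X μ (-t)) := by
  have hsplit : {ω | ε ≤ |X ω|} ⊆ {ω | ε ≤ X ω} ∪ {ω | X ω ≤ -ε} := fun ω (hω : ε ≤ |X ω|) =>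
    (le_abs'.1 hω).symm
  have hlow := measure_le_le_exp_mul_mgf (-ε) (neg_nonpos.2 ht) h_int'
  rw [neg_neg, mul_neg, ← neg_mul] at hlow
  calc μ.real {ω | ε ≤ |X ω|} ≤ μ.real {ω | ε ≤ X ω} + μ.real {ω | X ω ≤ -ε} :=
        (measureReal_mono hsplit).trans (measureReal_union_le _ _)
    _ ≤ exp (-t * ε) * mgf X μ t + exp (-t * ε) * mgf X μ (-t) :=
        add_le_add (measure_ge_le_exp_mul_mgf ε ht h_int) hlow
    _ = exp (-t * ε) * (mgf X μ t + mgf X μ (-t)) := by ring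

end ProbabilityTheory

theorem lo_singh_exponential_inequality_general
    {Om : Type*} [MeasurableSpace Om] (P : Measure Om) [IsProbabilityMeasure P]
    (n : ℕ) (eta : ℕ → Om → ℝ)
    (hmeas : ∀ i, Measurable (eta i))
    (hindep : iIndepFun eta P)
    (hident : ∀ i, IdentDistrib (eta i) (eta 0) P P)
    (hmean : ∫ ω, eta 0 ω ∂P = 0)
    (c : ℝ) (hbdd : ∀ i, ∀ᵐ ω ∂P, |eta i ω| ≤ c)
    (sigma : ℝ) (hvar : variance (eta 0) P = sigma ^ 2)
    (z d : ℝ) (hz : 0 < z) (hd : 0 < d)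
    (hcz : c * z ≤ d) (hnz : (n : ℝ) * z * sigma ^ 2 ≤ d ^ 2) :
    (P {ω | 3 * d ≤ |∑ i ∈ Finset.range n, eta i ω|}).toReal ≤ 2 * Real.exp (-z) := by
  set t := z / d
  have ht : 0 ≤ t := by positivity
  have hmgf : ∀ s, |s| = t →
      mgf (∑ i ∈ Finset.range n, eta i) P s ≤ exp (n * (3 / 4 * t ^ 2 * sigma ^ 2)) := by
    intro s hs
    have hsc : |s| * c ≤ 1 := by
      rw [hs, div_mul_eq_mul_div, div_le_one hd]; linarith
    have := hindep.mgf_sum_le_exp_mul_variance hmeas hident hmean (hbdd 0) hsc (Finset.range n)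
    rwa [Finset.card_range, hvar, ← sq_abs s, hs] at this
  have hint : ∀ s, Integrable (fun ω => exp (s * (∑ i ∈ Finset.range n, eta i) ω)) P := fun s =>
    hindep.integrable_exp_mul_sum hmeas fun i _ =>
      integrable_exp_mul_of_mem_Icc (hmeas i).aemeasurable ((hbdd i).mono fun ω h => abs_le.1 h)
  have htd : t * d = z := div_mul_cancel₀ z hd.ne'
  have hvariance_term : n * t ^ 2 * sigma ^ 2 ≤ z := by
    rw [div_pow, mul_div_assoc', div_mul_eq_mul_div, div_le_iff₀ (by positivity)]
    nlinarith
  simp only [← Finset.sum_apply, ← measureReal_def]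
  calc P.real {ω | 3 * d ≤ |(∑ i ∈ Finset.range n, eta i) ω|}
      ≤ exp (-t * (3 * d)) * (mgf (∑ i ∈ Finset.range n, eta i) P t
          + mgf (∑ i ∈ Finset.range n, eta i) P (-t)) :=
        measureReal_abs_ge_le_exp_mul_mgf_add _ ht (hint t) (hint (-t))
    _ ≤ exp (-t * (3 * d)) * (2 * exp (n * (3 / 4 * t ^ 2 * sigma ^ 2))) := by
        gcongr
        linarith [hmgf t (abs_of_nonneg ht), hmgf (-t) (by rw [abs_neg, abs_of_nonneg ht])]
    _ ≤ 2 * exp (-z) := by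
        rw [mul_left_comm, ← exp_add]
        gcongr
        linarith

/-- **Lemma 3.1 (Lo & Singh's exponential inequality).** If `η₁, …, η_n` are i.i.d. with mean
zero, `|η_i| ≤ c` a.s. and `Var(η₁) = σ²`, then for positive `z`, `d` with `c z ≤ d` and
`n z σ² ≤ d²` one has `P(|∑ η_i| ≥ 3d) ≤ 2 e^{-z}`. -/
theorem lo_singh_exponential_inequality
    {Om : Type*} [MeasurableSpace Om] (P : Measure Om) [IsProbabilityMeasure P]
    (n : ℕ) (eta : ℕ → Om → ℝ)
    (hmeas : ∀ i, Measurable (eta i))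
    (hindep : iIndepFun eta P)
    (hident : ∀ i, IdentDistrib (eta i) (eta 0) P P)
    (hmean : ∫ ω, eta 0 ω ∂P = 0)
    (c : ℝ) (hc : 0 < c) (hbdd : ∀ i, ∀ᵐ ω ∂P, |eta i ω| ≤ c)
    (sigma : ℝ) (hvar : variance (eta 0) P = sigma ^ 2)
    (z d : ℝ) (hz : 0 < z) (hd : 0 < d)
    (hcz : c * z ≤ d) (hnz : (n : ℝ) * z * sigma ^ 2 ≤ d ^ 2) :
    (P {ω | 3 * d ≤ |∑ i ∈ Finset.range n, eta i ω|}).toReal ≤ 2 * Real.exp (-z) :=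
  lo_singh_exponential_inequality_general P n eta hmeas hindep hident hmean c hbdd sigma hvar z d hz
    hd hcz hnz
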